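/- arXiv:1702.05014 — 5 statements merged into one kernel-verified Lean document; each statement's English description precedes it below -/
import Mathlib

section
/- There exists a continuous map f from the 2-sphere S² to itself which is homotopic to the identity map (i.e. has degree 1), has exactly one fixed point, and satisfies f(x) ≠ −x for every x ∈ S²; in particular the composition A∘f of f with the antipodal map A is fixed point free. -/
noncomputable section

open Metric

abbrev E3 := EuclideanSpace ℝ (Fin 3)
abbrev S2 := Metric.sphere (0 : E3) 1

namespace Stmt0Aux

def DD (x : E3) : ℝ := 2 * x 0 - x 2 + 3

def w (x : E3) : E3 :=
  (WithLp.equiv 2 (Fin 3 → ℝ)).symm ![2 * (x 0 - x 2 + 1), 2 * x 1, 2 * x 0 + x 2 + 1]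

lemma sq_sum {x : E3} (hx : ‖x‖ = 1) : x 0 ^ 2 + x 1 ^ 2 + x 2 ^ 2 = 1 := by
  have h := EuclideanSpace.norm_eq x
  rw [hx] at h
  have h2 : (1:ℝ) ^ 2 = (Real.sqrt (∑ i, ‖x i‖ ^ 2)) ^ 2 := by rw [← h]
  rw [Real.sq_sqrt (by positivity)] at h2
  simpa [Fin.sum_univ_three, Real.norm_eq_abs, sq_abs] using h2.symm

lemma DD_pos {x : E3} (hx : ‖x‖ = 1) : 0 < DD x := by
  have := sq_sum hx
  unfold DD
  nlinarith [sq_nonneg (x 0 + 1), sq_nonneg (x 2 - 1), sq_nonneg (x 1)]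

lemma w0 (x : E3) : w x 0 = 2 * (x 0 - x 2 + 1) := rfl
lemma w1 (x : E3) : w x 1 = 2 * x 1 := rfl
lemma w2 (x : E3) : w x 2 = 2 * x 0 + x 2 + 1 := rfl

lemma norm_w {x : E3} (hx : ‖x‖ = 1) : ‖w x‖ = DD x := by
  have hs := sq_sum hx
  have hD := DD_pos hx
  rw [EuclideanSpace.norm_eq]
  rw [show (∑ i, ‖w x i‖ ^ 2) = DD x ^ 2 by
    simp [Fin.sum_univ_three, w0, w1, w2, Real.norm_eq_abs, sq_abs, DD]; ring_nf; nlinarith []]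
  exact Real.sqrt_sq hD.le

lemma alg_fixed (a b c : ℝ) (hs : a^2+b^2+c^2 = 1)
    (E0 : 2 * (a - c + 1) = (2*a - c + 3) * a)
    (E1 : 2 * b = (2*a - c + 3) * b)
    (E2 : 2 * a + c + 1 = (2*a - c + 3) * c) :
    a = 0 ∧ b = 0 ∧ c = 1 := by
  have key : (1 - c) * (2*a + 1 - c) = 0 := by nlinarith [E2]
  have hc1 : c = 1 := by
    rcases mul_eq_zero.1 key with h1 | h1
    · linarith
    · nlinarith [E0]
  refine ⟨?_, ?_, hc1⟩ <;> nlinarith [sq_nonneg a, sq_nonneg b]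

lemma alg_anti (a b c : ℝ) (hs : a^2+b^2+c^2 = 1)
    (E0 : 2 * (a - c + 1) = -(2*a - c + 3) * a)
    (E1 : 2 * b = -(2*a - c + 3) * b)
    (E2 : 2 * a + c + 1 = -(2*a - c + 3) * c) :
    False := by
  have hb : b = 0 := by nlinarith [sq_nonneg b, sq_nonneg (a+1), sq_nonneg (c-1)]
  nlinarith [sq_nonneg (a+1), sq_nonneg (c-1), sq_nonneg (a-c), sq_nonneg (a+c),
    sq_nonneg (2*a-c+3)]

lemma ext3 {u v : E3} (h0 : u 0 = v 0) (h1 : u 1 = v 1) (h2 : u 2 = v 2) : u = v := by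
  apply (WithLp.equiv 2 (Fin 3 → ℝ)).injective
  funext i
  fin_cases i <;> assumption

lemma mem_S2 {x : E3} (hx : ‖x‖ = 1) : (DD x)⁻¹ • w x ∈ S2 := by
  rw [mem_sphere_zero_iff_norm, norm_smul, norm_w hx, Real.norm_eq_abs,
    abs_of_pos (inv_pos.2 (DD_pos hx)), inv_mul_cancel₀ (DD_pos hx).ne']

lemma cont_proj (i : Fin 3) : Continuous fun x : E3 => x i :=
  (continuous_apply i).comp (PiLp.continuous_ofLp 2 _)

lemma cont_w : Continuous w := by
  apply (PiLp.continuous_toLp 2 (fun _ : Fin 3 => ℝ)).comp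
  refine continuous_pi fun i => ?_
  fin_cases i <;> simp <;>
    exact by fun_prop (disch := exact cont_proj _)

lemma cont_DD : Continuous DD := by
  unfold DD
  exact ((continuous_const.mul (cont_proj 0)).sub (cont_proj 2)).add continuous_const

def fmap : C(S2, S2) where
  toFun x := ⟨(DD x)⁻¹ • w x, mem_S2 (mem_sphere_zero_iff_norm.1 x.2)⟩
  continuous_toFun := by
    apply Continuous.subtype_mk
    have hc : Continuous fun x : S2 => (x : E3) := continuous_subtype_val
    exact ((cont_DD.comp hc).inv₀ fun x =>
      (DD_pos (mem_sphere_zero_iff_norm.1 x.2)).ne').smul (cont_w.comp hc)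

lemma fmap_coe (x : S2) : (fmap x : E3) = (DD (x:E3))⁻¹ • w (x:E3) := rfl

lemma smul_apply' (r : ℝ) (v : E3) (i : Fin 3) : (r • v) i = r * v i := rfl

lemma fmap_ne_neg (x : S2) : fmap x ≠ -x := by
  intro h
  have hx : ‖(x:E3)‖ = 1 := mem_sphere_zero_iff_norm.1 x.2
  have hD := DD_pos hx
  have hcoe : (DD (x:E3))⁻¹ • w (x:E3) = -(x:E3) := by
    have := congrArg Subtype.val h
    rw [← fmap_coe]; simpa using this
  have hw : w (x:E3) = -(DD (x:E3)) • (x:E3) := by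
    have := congrArg (fun v : E3 => DD (x:E3) • v) hcoe
    simp only [smul_smul, mul_inv_cancel₀ hD.ne', one_smul, smul_neg] at this
    rw [this, neg_smul]
  exact alg_anti _ _ _ (sq_sum hx)
    (by have := congrFun (congrArg (WithLp.equiv 2 _) hw) 0
        simpa [w, DD, smul_apply'] using this)
    (by have := congrFun (congrArg (WithLp.equiv 2 _) hw) 1
        simpa [w, DD, smul_apply'] using this)
    (by have := congrFun (congrArg (WithLp.equiv 2 _) hw) 2
        simpa [w, DD, smul_apply'] using this)

def north : S2 := ⟨(WithLp.equiv 2 (Fin 3 → ℝ)).symm ![0, 0, 1], by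
  rw [mem_sphere_zero_iff_norm, EuclideanSpace.norm_eq]
  simp [Fin.sum_univ_three]⟩

lemma north0 : ((north : S2) : E3) 0 = 0 := rfl
lemma north1 : ((north : S2) : E3) 1 = 0 := rfl
lemma north2 : ((north : S2) : E3) 2 = 1 := rfl

lemma fmap_north : fmap north = north := by
  apply Subtype.ext
  rw [fmap_coe]
  have hD : DD ((north : S2) : E3) = 2 := by
    simp [DD, north0, north2]; norm_num
  apply ext3 <;>
    rw [smul_apply', hD] <;>
    simp [w, north0, north1, north2] <;> norm_num

lemma fixed_eq_north (x : S2) (h : fmap x = x) : x = north := by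
  have hx : ‖(x:E3)‖ = 1 := mem_sphere_zero_iff_norm.1 x.2
  have hD := DD_pos hx
  have hcoe : (DD (x:E3))⁻¹ • w (x:E3) = (x:E3) := congrArg Subtype.val h
  have hw : w (x:E3) = DD (x:E3) • (x:E3) := by
    have := congrArg (fun v : E3 => DD (x:E3) • v) hcoe
    simpa [smul_smul, mul_inv_cancel₀ hD.ne'] using this
  obtain ⟨ha, hb, hc⟩ := alg_fixed ((x:E3) 0) ((x:E3) 1) ((x:E3) 2) (sq_sum hx)
    (by have := congrFun (congrArg (WithLp.equiv 2 _) hw) 0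
        simpa [w, DD, smul_apply'] using this)
    (by have := congrFun (congrArg (WithLp.equiv 2 _) hw) 1
        simpa [w, DD, smul_apply'] using this)
    (by have := congrFun (congrArg (WithLp.equiv 2 _) hw) 2
        simpa [w, DD, smul_apply'] using this)
  exact Subtype.ext (ext3 (by rw [ha, north0]) (by rw [hb, north1]) (by rw [hc, north2]))

def u (p : unitInterval × S2) : E3 :=
  (1 - (p.1 : ℝ)) • (fmap p.2 : E3) + (p.1 : ℝ) • ((p.2 : S2) : E3)

lemma u_ne (p : unitInterval × S2) : u p ≠ 0 := by
  intro h
  obtain ⟨t, x⟩ := p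
  have ha : ‖(fmap x : E3)‖ = 1 := mem_sphere_zero_iff_norm.1 (fmap x).2
  have hb : ‖(x : E3)‖ = 1 := mem_sphere_zero_iff_norm.1 x.2
  have h0 : (0:ℝ) ≤ t := t.2.1
  have h1 : (t:ℝ) ≤ 1 := t.2.2
  have heq : (1 - (t:ℝ)) • (fmap x : E3) = (t:ℝ) • (-(x:E3)) := by
    have : (1 - (t:ℝ)) • (fmap x : E3) + (t:ℝ) • ((x:S2) : E3) = 0 := h
    rw [smul_neg]; linear_combination (norm := module) this
  have hnorm : (1 - (t:ℝ)) = (t:ℝ) := by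
    have := congrArg norm heq
    rw [norm_smul, norm_smul, ha, norm_neg, hb] at this
    simpa [Real.norm_eq_abs, abs_of_nonneg h0,
      abs_of_nonneg (by linarith : (0:ℝ) ≤ 1 - t)] using this
  have ht : (t:ℝ) = 1/2 := by linarith
  have : (fmap x : E3) = -(x:E3) := by
    have h12 : (1 - (t:ℝ)) = 1/2 := by linarith
    rw [h12, ht] at heq
    exact smul_right_injective E3 (by norm_num : (1/2:ℝ) ≠ 0) heq
  exact fmap_ne_neg x (by apply Subtype.ext; simpa using this)

lemma cont_u : Continuous u := by
  unfold u
  have h1 : Continuous fun p : unitInterval × S2 => (p.1 : ℝ) :=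
    continuous_subtype_val.comp continuous_fst
  have h2 : Continuous fun p : unitInterval × S2 => (fmap p.2 : E3) :=
    continuous_subtype_val.comp (fmap.continuous.comp continuous_snd)
  have h3 : Continuous fun p : unitInterval × S2 => ((p.2 : S2) : E3) :=
    continuous_subtype_val.comp continuous_snd
  exact ((continuous_const.sub h1).smul h2).add (h1.smul h3)

def H : fmap.Homotopy (ContinuousMap.id S2) where
  toFun p := ⟨‖u p‖⁻¹ • u p, by
    have hne : ‖u p‖ ≠ 0 := norm_ne_zero_iff.2 (u_ne p)
    rw [mem_sphere_zero_iff_norm, norm_smul, Real.norm_eq_abs,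
      abs_of_nonneg (inv_nonneg.2 (norm_nonneg _)), inv_mul_cancel₀ hne]⟩
  continuous_toFun := by
    apply Continuous.subtype_mk
    exact ((cont_u.norm.inv₀ fun p => norm_ne_zero_iff.2 (u_ne p))).smul cont_u
  map_zero_left x := by
    apply Subtype.ext
    have hu : u (0, x) = (fmap x : E3) := by simp [u]
    simp only [ContinuousMap.coe_mk, hu, mem_sphere_zero_iff_norm.1 (fmap x).2]
    norm_num
  map_one_left x := by
    apply Subtype.ext
    have hu : u (1, x) = ((x:S2) : E3) := by simp [u]
    simp only [ContinuousMap.coe_mk, hu, mem_sphere_zero_iff_norm.1 x.2]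
    norm_num

lemma fmap_homotopic : fmap.Homotopic (ContinuousMap.id S2) := ⟨H⟩

end Stmt0Aux

/-- There is a self-map of the 2-sphere, homotopic to the identity (hence of degree 1),
with exactly one fixed point, which moreover never hits the antipode of its argument;
in particular its composition with the antipodal map `A : x ↦ -x` is fixed point free. -/
theorem stmt0 :
    ∃ f : C(S2, S2),
      f.Homotopic (ContinuousMap.id S2) ∧
      (∃! x : S2, f x = x) ∧
      (∀ x : S2, f x ≠ -x) ∧
      (∀ x : S2, -(f x) ≠ x) := by
  exact ⟨Stmt0Aux.fmap, Stmt0Aux.fmap_homotopic,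
    ⟨Stmt0Aux.north, Stmt0Aux.fmap_north, fun y hy => Stmt0Aux.fixed_eq_north y hy⟩,
    Stmt0Aux.fmap_ne_neg, fun x h => Stmt0Aux.fmap_ne_neg x (Subtype.ext (by
      have h' := congrArg Subtype.val h
      simp only [coe_neg_sphere] at h' ⊢
      exact neg_eq_iff_eq_neg.mp h'))⟩
end
end

section
/- The map from S² to the ordered configuration space F₂(S²) given by x ↦ (x, −x) is a continuous map and is a homotopy equivalence. -/
/-! The antipodal pairs `(x, -x)` form a deformation retract of `F₂(S)` for the unit sphere `S` of
any real normed space: keep the first point `x` and slide the second point `y` to `-x` along the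
normalized segment `(1 - t) • y - t • x`. If `(1 - t) • y - t • x = c • x` with `c ≥ 0`, taking
norms gives `1 - t = c + t > 0` and then `y = x`; so for `x ≠ y` the segment avoids both `0` and
the ray through `x`, and the two points stay distinct throughout. -/

noncomputable section

open Metric

/-- Ordered configuration space. -/
def Conf (n : ℕ) (Y : Type*) [TopologicalSpace Y] : Type _ :=
  {y : Fin n → Y // Function.Injective y}

instance (n : ℕ) (Y : Type*) [TopologicalSpace Y] : TopologicalSpace (Conf n Y) :=
  instTopologicalSpaceSubtype

/-- The setoid on `Conf n Y` given by the permutation action. -/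
def permSetoid (n : ℕ) (Y : Type*) [TopologicalSpace Y] : Setoid (Conf n Y) where
  r a b := ∃ σ : Equiv.Perm (Fin n), b.1 = a.1 ∘ σ
  iseqv := by
    constructor
    · exact fun a => ⟨1, by ext i; simp⟩
    · rintro a b ⟨σ, h⟩
      exact ⟨σ⁻¹, by ext i; simp [h]⟩
    · rintro a b c ⟨σ, h⟩ ⟨τ, h'⟩
      exact ⟨σ * τ, by ext i; simp [h', h]⟩

/-- Unordered configuration space. -/
def UConf (n : ℕ) (Y : Type*) [TopologicalSpace Y] : Type _ :=
  Quotient (permSetoid n Y)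

instance (n : ℕ) (Y : Type*) [TopologicalSpace Y] : TopologicalSpace (UConf n Y) :=
  instTopologicalSpaceQuotient

lemma S2.ne_neg (x : S2) : (x : E3) ≠ -(x : E3) := by
  intro h
  have hx : (x : E3) = 0 := by
    have h2 : (x : E3) + (x : E3) = 0 := by
      nth_rewrite 2 [h]; simp
    have h3 : (2 : ℝ) • (x : E3) = 0 := by rw [two_smul]; exact h2
    have := smul_eq_zero.mp h3
    simpa using this
  have := x.2
  rw [mem_sphere_zero_iff_norm] at this
  rw [hx] at this
  simp at this

/-- The antipodal setoid on the sphere. -/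
def antipodalSetoid : Setoid S2 where
  r x y := (x : E3) = y ∨ (x : E3) = -y
  iseqv := by
    constructor
    · exact fun x => Or.inl rfl
    · rintro x y (h | h)
      · exact Or.inl h.symm
      · exact Or.inr (by rw [h]; simp)
    · rintro x y z (h | h) (h' | h')
      · exact Or.inl (h.trans h')
      · exact Or.inr (by rw [h, h'])
      · exact Or.inr (by rw [h, h'])
      · exact Or.inl (by rw [h, h']; simp)

/-- The real projective plane, as the quotient of the sphere by the antipodal map. -/
def RP2 : Type _ := Quotient antipodalSetoid

instance : TopologicalSpace RP2 := instTopologicalSpaceQuotient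

/-- The canonical projection from the sphere to the projective plane. -/
def pS2 : S2 → RP2 := Quotient.mk antipodalSetoid

lemma pS2.continuous : Continuous pS2 := continuous_quotient_mk'

/-- The underlying vector of the map `U_P`. -/
def Uvec (P x : E3) : E3 := (2 * inner ℝ P x : ℝ) • x - P

lemma Uvec.norm_eq (P x : E3) (hP : ‖P‖ = 1) (hx : ‖x‖ = 1) : ‖Uvec P x‖ = 1 := by
  have h1 : ‖Uvec P x‖ ^ 2 = 1 := by
    rw [Uvec, norm_sub_sq_real, norm_smul, real_inner_smul_left, real_inner_comm x P, hx, hP,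
      Real.norm_eq_abs, mul_one, one_pow, sq_abs]
    ring
  nlinarith [norm_nonneg (Uvec P x)]

lemma Uvec.neg (P x : E3) : Uvec P (-x) = Uvec P x := by
  simp [Uvec, inner_neg_right]

/-- The map `U_P` on the sphere. -/
def USph (P x : S2) : S2 :=
  ⟨Uvec P.1 x.1, by
    rw [mem_sphere_zero_iff_norm]
    exact Uvec.norm_eq _ _ (by simp [← mem_sphere_zero_iff_norm, P.2])
      (by simp [← mem_sphere_zero_iff_norm, x.2])⟩

lemma USph.continuous (P : S2) : Continuous (USph P) := by
  apply Continuous.subtype_mk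
  apply Continuous.sub
  · exact (continuous_const.mul (Continuous.inner (𝕜 := ℝ) continuous_const continuous_subtype_val)).smul
      continuous_subtype_val
  · exact continuous_const

/-- The map `W_P` on the projective plane. -/
def WP (P : S2) : RP2 → RP2 :=
  Quotient.lift (fun x => pS2 (USph P x)) (by
    rintro a b (h | h)
    · have hab : a = b := Subtype.ext h
      show pS2 (USph P a) = pS2 (USph P b)
      rw [hab]
    · have hab : USph P a = USph P b :=
        Subtype.ext (show Uvec P.1 a.1 = Uvec P.1 b.1 by rw [h, Uvec.neg])
      show pS2 (USph P a) = pS2 (USph P b)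
      rw [hab])

lemma WP.continuous (P : S2) : Continuous (WP P) :=
  Continuous.quotient_lift (pS2.continuous.comp (USph.continuous P)) _

/-- `W_P` as a continuous map. -/
def WPc (P : S2) : C(RP2, RP2) := ⟨WP P, WP.continuous P⟩

lemma WPc_apply (P : S2) (x : S2) : WPc P (pS2 x) = pS2 (USph P x) := rfl

lemma S2.ne_neg' (x : S2) : x ≠ -x := fun h => S2.ne_neg x (congrArg Subtype.val h)

/-- The map `x ↦ (x, -x)` into the ordered configuration space `F₂(S²)`. -/
def pairMap (x : S2) : Conf 2 S2 :=
  ⟨![x, -x], by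
    intro i j hij
    fin_cases i <;> fin_cases j <;> simp_all
    · exact S2.ne_neg' x hij
    · exact S2.ne_neg' x hij.symm⟩

namespace Conf

variable {Y : Type*} [TopologicalSpace Y]

lemma continuous_apply {n : ℕ} (i : Fin n) : Continuous fun c : Conf n Y => c.1 i :=
  (_root_.continuous_apply i).comp continuous_subtype_val

lemma apply_zero_ne_apply_one (c : Conf 2 Y) : c.1 0 ≠ c.1 1 :=
  fun h => Fin.zero_ne_one (c.2 h)

lemma coe_apply_zero_ne_coe_apply_one {s : Set Y} (c : Conf 2 s) : (c.1 0 : Y) ≠ c.1 1 :=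
  Subtype.coe_injective.ne c.apply_zero_ne_apply_one

def mkPair (x y : Y) (h : x ≠ y) : Conf 2 Y :=
  ⟨![x, y], injective_pair_iff_ne.mpr h⟩

lemma continuous_mkPair {X : Type*} [TopologicalSpace X] {f g : X → Y} (hf : Continuous f)
    (hg : Continuous g) (h : ∀ a, f a ≠ g a) : Continuous fun a => mkPair (f a) (g a) (h a) := by
  refine Continuous.subtype_mk (continuous_pi fun i => ?_) _
  fin_cases i
  exacts [hf, hg]

def proj {n : ℕ} (i : Fin n) : C(Conf n Y, Y) := ⟨fun c => c.1 i, continuous_apply i⟩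

end Conf

section NormedSpace

variable {E : Type*} [NormedAddCommGroup E] [NormedSpace ℝ E]

lemma one_sub_smul_sub_smul_ne_nonneg_smul {x y : E} (hx : ‖x‖ = 1) (hy : ‖y‖ = 1) (hxy : x ≠ y)
    {t c : ℝ} (ht₀ : 0 ≤ t) (ht₁ : t ≤ 1) (hc : 0 ≤ c) : (1 - t) • y - t • x ≠ c • x := by
  intro h
  have hyx : (1 - t) • y = (c + t) • x := by rw [add_smul, ← h]; abel
  have hcoeff : 1 - t = c + t := by
    simpa [norm_smul, hx, hy, abs_of_nonneg (sub_nonneg.mpr ht₁), abs_of_nonneg (add_nonneg hc ht₀)]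
      using congrArg norm hyx
  rw [← hcoeff] at hyx
  exact hxy (smul_right_injective E (by linarith : 1 - t ≠ 0) hyx).symm

def slideToAntipode (t : ℝ) (x y : E) : E := ‖(1 - t) • y - t • x‖⁻¹ • ((1 - t) • y - t • x)

section slideToAntipode

variable {x y : E} (hx : ‖x‖ = 1) (hy : ‖y‖ = 1) (hxy : x ≠ y) {t : ℝ} (ht₀ : 0 ≤ t) (ht₁ : t ≤ 1)
include hx hy hxy ht₀ ht₁

lemma one_sub_smul_sub_smul_ne_zero : (1 - t) • y - t • x ≠ 0 := by
  simpa using one_sub_smul_sub_smul_ne_nonneg_smul hx hy hxy ht₀ ht₁ le_rfl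

lemma norm_slideToAntipode : ‖slideToAntipode t x y‖ = 1 := by
  rw [slideToAntipode, norm_smul, norm_inv, norm_norm,
    inv_mul_cancel₀ (norm_ne_zero_iff.mpr (one_sub_smul_sub_smul_ne_zero hx hy hxy ht₀ ht₁))]

lemma ne_slideToAntipode : x ≠ slideToAntipode t x y := by
  intro h
  set v := (1 - t) • y - t • x with hv
  have hv₀ : ‖v‖ ≠ 0 := norm_ne_zero_iff.mpr (one_sub_smul_sub_smul_ne_zero hx hy hxy ht₀ ht₁)
  have hxv : ‖v‖ • x = v := by
    rw [h, slideToAntipode, ← hv, smul_smul, mul_inv_cancel₀ hv₀, one_smul]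
  exact one_sub_smul_sub_smul_ne_nonneg_smul hx hy hxy ht₀ ht₁ (norm_nonneg v) hxv.symm

end slideToAntipode

lemma slideToAntipode_zero (x : E) {y : E} (hy : ‖y‖ = 1) : slideToAntipode 0 x y = y := by
  simp [slideToAntipode, hy]

lemma slideToAntipode_one {x : E} (hx : ‖x‖ = 1) (y : E) : slideToAntipode 1 x y = -x := by
  simp [slideToAntipode, hx]

local notation "𝕊" => sphere (0 : E) 1

def antipodalPair (x : 𝕊) : Conf 2 𝕊 := Conf.mkPair x (-x) (ne_neg_of_mem_unit_sphere ℝ x)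

lemma continuous_antipodalPair : Continuous (antipodalPair (E := E)) :=
  Conf.continuous_mkPair continuous_id continuous_neg _

lemma Continuous.slideToAntipode {X : Type*} [TopologicalSpace X] {t : X → ℝ} {x y : X → E}
    (ht : Continuous t) (hx : Continuous x) (hy : Continuous y)
    (h₀ : ∀ a, (1 - t a) • y a - t a • x a ≠ 0) :
    Continuous fun a => slideToAntipode (t a) (x a) (y a) := by
  have hv : Continuous fun a => (1 - t a) • y a - t a • x a := by fun_prop
  exact (hv.norm.inv₀ fun a => norm_ne_zero_iff.mpr (h₀ a)).smul hv

def slideToAntipodeSphere (p : unitInterval × Conf 2 𝕊) : 𝕊 :=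
  ⟨slideToAntipode p.1 (p.2.1 0) (p.2.1 1), mem_sphere_zero_iff_norm.mpr <|
    norm_slideToAntipode (norm_eq_of_mem_sphere _) (norm_eq_of_mem_sphere _)
      p.2.coe_apply_zero_ne_coe_apply_one p.1.2.1 p.1.2.2⟩

lemma ne_slideToAntipodeSphere (p : unitInterval × Conf 2 𝕊) :
    p.2.1 0 ≠ slideToAntipodeSphere p := fun h =>
  ne_slideToAntipode (norm_eq_of_mem_sphere _) (norm_eq_of_mem_sphere _)
    p.2.coe_apply_zero_ne_coe_apply_one p.1.2.1 p.1.2.2 (congrArg Subtype.val h)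

lemma continuous_slideToAntipodeSphere : Continuous (slideToAntipodeSphere (E := E)) :=
  Continuous.subtype_mk ((continuous_subtype_val.comp continuous_fst).slideToAntipode
    (continuous_subtype_val.comp ((Conf.continuous_apply 0).comp continuous_snd))
    (continuous_subtype_val.comp ((Conf.continuous_apply 1).comp continuous_snd)) fun p =>
      one_sub_smul_sub_smul_ne_zero (norm_eq_of_mem_sphere _) (norm_eq_of_mem_sphere _)
        p.2.coe_apply_zero_ne_coe_apply_one p.1.2.1 p.1.2.2) _

def antipodalPairHomotopy :
    ContinuousMap.Homotopy (ContinuousMap.id (Conf 2 𝕊))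
      ((⟨antipodalPair, continuous_antipodalPair⟩ : C(𝕊, Conf 2 𝕊)).comp (Conf.proj 0)) where
  toFun p := Conf.mkPair (p.2.1 0) (slideToAntipodeSphere p) (ne_slideToAntipodeSphere p)
  continuous_toFun := Conf.continuous_mkPair ((Conf.continuous_apply 0).comp continuous_snd)
    continuous_slideToAntipodeSphere _
  map_zero_left c := by
    refine Subtype.ext (funext fun i => ?_)
    fin_cases i
    · rfl
    · exact Subtype.ext (slideToAntipode_zero _ (norm_eq_of_mem_sphere _))
  map_one_left c := by
    refine Subtype.ext (funext fun i => ?_)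
    fin_cases i
    · rfl
    · exact Subtype.ext (slideToAntipode_one (norm_eq_of_mem_sphere _) _)

variable (E) in
def antipodalPairHomotopyEquiv : ContinuousMap.HomotopyEquiv 𝕊 (Conf 2 𝕊) where
  toFun := ⟨antipodalPair, continuous_antipodalPair⟩
  invFun := Conf.proj 0
  left_inv := ContinuousMap.Homotopic.refl _
  right_inv := ⟨antipodalPairHomotopy.symm⟩

end NormedSpace

/-- The map `x ↦ (x, -x)` from `S²` to the ordered configuration space `F₂(S²)`
is continuous and is a homotopy equivalence. -/
theorem stmt1 :
    Continuous pairMap ∧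
    ∃ e : ContinuousMap.HomotopyEquiv S2 (Conf 2 S2), ∀ x : S2, e.toFun x = pairMap x :=
  ⟨continuous_antipodalPair, antipodalPairHomotopyEquiv E3, fun _ => rfl⟩
end
end

section
/- Assume the covering setup. Let x₀ ∈ X and suppose x̃₀ ∈ q⁻¹(x₀) satisfies q(x̃₀) = fᵢ(x̃₀) for some index i. Then the set of indices j such that there exists y ∈ q⁻¹(x₀) with q(y) = fⱼ(y) is exactly the orbit of i under the subgroup Γ(G) of S_n acting on {1,…,n}. -/
/-- In the covering setup, given `x₀ ∈ X` and `x̃₀ ∈ q⁻¹(x₀)` with `q x̃₀ = fᵢ x̃₀`, the set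
of indices `j` such that some point of the fibre `q⁻¹(x₀)` is a coincidence point of `q`
and `fⱼ` is exactly the orbit of `i` under the subgroup `Γ(G)` of the symmetric group. -/
theorem stmt15
    {Xh X : Type*} [TopologicalSpace Xh] [TopologicalSpace X]
    (q : Xh → X) (hq : IsCoveringMap q)
    {G : Type*} [Group G] [MulAction G Xh]
    (hGcont : ∀ g : G, Continuous fun y : Xh => g • y)
    (hGfib : ∀ (g : G) (y : Xh), q (g • y) = q y)
    (hGtrans : ∀ y y' : Xh, q y = q y' → ∃! g : G, g • y = y')
    (n : ℕ) (hn : 1 ≤ n) (Γ : G →* Equiv.Perm (Fin n))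
    (f : Fin n → Xh → X) (hfcont : ∀ i, Continuous (f i))
    (hfdisj : ∀ (i j : Fin n), i ≠ j → ∀ y : Xh, f i y ≠ f j y)
    (hfequiv : ∀ (g : G) (y : Xh) (i : Fin n), f (Γ g i) (g • y) = f i y)
    (x₀ : X) (x0 : Xh) (hfib : q x0 = x₀) (i : Fin n) (hx0 : q x0 = f i x0) :
    ∀ j : Fin n, (∃ y : Xh, q y = x₀ ∧ q y = f j y) ↔ ∃ g : G, Γ g i = j := by
  intro j
  constructor
  · rintro ⟨y, hy, hyj⟩
    obtain ⟨g, hg, -⟩ := hGtrans x0 y (by rw [hy, hfib])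
    refine ⟨g, ?_⟩
    by_contra hne
    apply hfdisj (Γ g i) j hne y
    rw [← hg, hfequiv, ← hx0, hg, ← hyj, hy, hfib]
  · rintro ⟨g, hg⟩
    refine ⟨g • x0, by rw [hGfib, hfib], ?_⟩
    rw [← hg, hfequiv, hGfib, hx0]
end

section
/- Assume the covering setup, fix an index i, and let x̃₀ ∈ Coin(q,fᵢ). (1) For every z̃ ∈ q⁻¹(q(x̃₀)) ∩ Coin(q,fᵢ), there is a bijection between K_i(x̃₀) and K_i(z̃). (2) For every z̃ ∈ Coin(q,fᵢ) that is Nielsen coincidence equivalent to x̃₀ for (q,fᵢ), there is a bijection between K_i(x̃₀) and K_i(z̃). -/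
/-- Two coincidence points `y₁, y₂` of the pair `(q, f)` are Nielsen coincidence
equivalent if there is a path `γ` from `y₁` to `y₂` such that `q ∘ γ` and `f ∘ γ` are
homotopic relative to their endpoints. -/
def CoinEquiv {Xh X : Type*} [TopologicalSpace Xh] [TopologicalSpace X]
    (q f : Xh → X) (hq : Continuous q) (hf : Continuous f)
    (y₁ y₂ : Xh) (h₁ : q y₁ = f y₁) (h₂ : q y₂ = f y₂) : Prop :=
  ∃ γ : Path y₁ y₂, (γ.map hq).Homotopic ((γ.map hf).cast h₁ h₂)

/-- Two points `x, x'` of `X` are Nielsen fixed-point equivalent if there are a path `γ`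
in `X̂` and an index `j` such that `q ∘ γ` and `fⱼ ∘ γ` are both paths from `x` to `x'`
and are homotopic relative to their endpoints. -/
def NielsenFixRel {Xh X : Type*} [TopologicalSpace Xh] [TopologicalSpace X]
    (q : Xh → X) (hq : Continuous q) {n : ℕ}
    (f : Fin n → Xh → X) (hf : ∀ i, Continuous (f i)) (x x' : X) : Prop :=
  ∃ (y y' : Xh) (γ : Path y y') (j : Fin n)
    (h1 : q y = x) (h2 : q y' = x') (h3 : f j y = x) (h4 : f j y' = x'),
    ((γ.map hq).cast h1.symm h2.symm).Homotopic ((γ.map (hf j)).cast h3.symm h4.symm)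

/-- `K_i(x̃)`: the set of points of the fibre `q⁻¹(q x̃)` that are coincidence points of
`(q, f)` and are Nielsen coincidence equivalent to `x̃`. -/
def Kset {Xh X : Type*} [TopologicalSpace Xh] [TopologicalSpace X]
    (q f : Xh → X) (hq : Continuous q) (hf : Continuous f)
    (xt : Xh) (hx : q xt = f xt) : Set Xh :=
  {y : Xh | ∃ hy : q y = f y, q y = q xt ∧ CoinEquiv q f hq hf xt y hx hy}

/-! A deck transformation `g` carrying one coincidence point of `(q, fᵢ)` to another must fix the
index `i`, since the `fⱼ` take pairwise distinct values; hence `g` commutes with `fᵢ`. Such a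
homeomorphism preserves coincidence points and Nielsen equivalence, so it maps `K_i(x̃₀)`
bijectively onto `K_i(g x̃₀)`, which is (1). For (2), the free transitive action identifies
`K_i(x̃)` with `{g | g x̃ ∈ K_i(x̃)}`, and this set is constant on a Nielsen class: if `x̃₀ ∼ z̃`,
then `g z̃ ∼ g x̃₀ ∼ x̃₀ ∼ z̃`. -/

section CoinEquiv

variable {Xh X : Type*} [TopologicalSpace Xh] [TopologicalSpace X]
  {q f : Xh → X} {hq : Continuous q} {hf : Continuous f}

theorem CoinEquiv.symm {a b : Xh} {ha : q a = f a} {hb : q b = f b}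
    (h : CoinEquiv q f hq hf a b ha hb) : CoinEquiv q f hq hf b a hb ha := by
  obtain ⟨γ, H⟩ := h
  refine ⟨γ.symm, ?_⟩
  rw [← Path.map_symm, ← Path.map_symm, Path.cast_symm]
  exact H.symm₂

theorem CoinEquiv.trans {a b c : Xh} {ha : q a = f a} {hb : q b = f b} {hc : q c = f c}
    (hab : CoinEquiv q f hq hf a b ha hb) (hbc : CoinEquiv q f hq hf b c hb hc) :
    CoinEquiv q f hq hf a c ha hc := by
  obtain ⟨γ, H⟩ := hab
  obtain ⟨δ, H'⟩ := hbc
  refine ⟨γ.trans δ, ?_⟩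
  rw [Path.map_trans, Path.map_trans, Path.cast_trans _ _ ha hb hc]
  exact H.hcomp H'

theorem CoinEquiv.map {φ : Xh → Xh} (hφ : Continuous φ) (hqφ : ∀ y, q (φ y) = q y)
    (hfφ : ∀ y, f (φ y) = f y) {a b : Xh} {ha : q a = f a} {hb : q b = f b}
    (ha' : q (φ a) = f (φ a)) (hb' : q (φ b) = f (φ b))
    (h : CoinEquiv q f hq hf a b ha hb) : CoinEquiv q f hq hf (φ a) (φ b) ha' hb' := by
  obtain ⟨γ, H⟩ := h
  refine ⟨γ.map hφ, ?_⟩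
  have hq_map : (γ.map hφ).map hq = (γ.map hq).cast (hqφ a) (hqφ b) := by
    ext t; simp [hqφ]
  have hf_map : ((γ.map hφ).map hf).cast ha' hb' =
      ((γ.map hf).cast ha hb).cast (hqφ a) (hqφ b) := by
    ext t; simp [hfφ]
  rw [hq_map, hf_map]
  exact H.pathCast _ _

theorem Kset.mapsTo {φ : Xh → Xh} (hφ : Continuous φ) (hqφ : ∀ y, q (φ y) = q y)
    (hfφ : ∀ y, f (φ y) = f y) {a b : Xh} (ha : q a = f a) (hb : q b = f b) (hab : φ a = b) :
    Set.MapsTo φ (Kset q f hq hf a ha) (Kset q f hq hf b hb) := by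
  subst hab
  rintro y ⟨hy, hya, hay⟩
  have hy' : q (φ y) = f (φ y) := by rw [hqφ, hfφ, hy]
  exact ⟨hy', by rw [hqφ, hqφ, hya], hay.map hφ hqφ hfφ hb hy'⟩

def Kset.equivOfHomeomorph (φ : Xh ≃ₜ Xh) (hqφ : ∀ y, q (φ y) = q y)
    (hfφ : ∀ y, f (φ y) = f y) {a : Xh} (ha : q a = f a) (ha' : q (φ a) = f (φ a)) :
    Kset q f hq hf a ha ≃ Kset q f hq hf (φ a) ha' :=
  have hqφ' (y : Xh) : q (φ.symm y) = q y := by rw [← hqφ, φ.apply_symm_apply]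
  have hfφ' (y : Xh) : f (φ.symm y) = f y := by rw [← hfφ, φ.apply_symm_apply]
  { toFun := (Kset.mapsTo φ.continuous hqφ hfφ ha ha' rfl).restrict
    invFun := (Kset.mapsTo φ.symm.continuous hqφ' hfφ' ha' ha (φ.symm_apply_apply a)).restrict
    left_inv y := Subtype.ext (φ.symm_apply_apply y)
    right_inv y := Subtype.ext (φ.apply_symm_apply y) }

end CoinEquiv

theorem apply_smul_eq_of_coin {Xh X G : Type*} [Group G] [MulAction G Xh] {q : Xh → X} {n : ℕ}
    {Γ : G →* Equiv.Perm (Fin n)} {f : Fin n → Xh → X}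
    (hGfib : ∀ (g : G) (y : Xh), q (g • y) = q y)
    (hfdisj : ∀ (i j : Fin n), i ≠ j → ∀ y : Xh, f i y ≠ f j y)
    (hfequiv : ∀ (g : G) (y : Xh) (i : Fin n), f (Γ g i) (g • y) = f i y) {i : Fin n}
    (g : G) (a : Xh) (ha : q a = f i a) (hga : q (g • a) = f i (g • a)) (y : Xh) :
    f i (g • y) = f i y := by
  have hΓ : Γ g i = i := by
    by_contra hne
    apply hfdisj _ _ hne (g • a)
    rw [hfequiv, ← ha, ← hGfib g, hga]
  simpa [hΓ] using hfequiv g y i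

section Deck

variable {Xh X G : Type*} [TopologicalSpace Xh] [TopologicalSpace X] [Group G] [MulAction G Xh]
  {q f : Xh → X} {hq : Continuous q} {hf : Continuous f}

noncomputable def smulPreimageEquiv (hGtrans : ∀ y y' : Xh, q y = q y' → ∃! g : G, g • y = y')
    {a : Xh} {s : Set Xh} (hs : ∀ y ∈ s, q y = q a) : (fun g : G => g • a) ⁻¹' s ≃ s :=
  Equiv.ofBijective (Set.MapsTo.restrict _ _ _ fun _ h => h) <| by
    refine ⟨fun g g' hgg' => Subtype.ext ?_, fun y => ?_⟩
    · have hgg' : g.1 • a = g'.1 • a := congrArg Subtype.val hgg'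
      obtain ⟨_, -, huniq⟩ := hGtrans a (g.1 • a) (hs _ g.2).symm
      exact (huniq g.1 rfl).trans (huniq g'.1 hgg'.symm).symm
    · obtain ⟨g, hg, -⟩ := hGtrans a y (hs y y.2).symm
      exact ⟨⟨g, show g • a ∈ s from hg ▸ y.2⟩, Subtype.ext hg⟩

theorem smul_mem_Kset_of_coinEquiv [ContinuousConstSMul G Xh]
    (hGfib : ∀ (g : G) (y : Xh), q (g • y) = q y)
    {g : G} (hg : ∀ y, f (g • y) = f y) {a b : Xh} {ha : q a = f a} {hb : q b = f b}
    (hab : CoinEquiv q f hq hf a b ha hb) (hga : g • a ∈ Kset q f hq hf a ha) :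
    g • b ∈ Kset q f hq hf b hb := by
  obtain ⟨hga', -, haga⟩ := hga
  have hgb' : q (g • b) = f (g • b) := by rw [hGfib, hg, hb]
  exact ⟨hgb', hGfib g b,
    hab.symm.trans (haga.trans (hab.map (continuous_const_smul g) (hGfib g) hg hga' hgb'))⟩

theorem smul_preimage_Kset_eq [ContinuousConstSMul G Xh]
    (hGfib : ∀ (g : G) (y : Xh), q (g • y) = q y)
    (hfG : ∀ (g : G) (a : Xh), q a = f a → q (g • a) = f (g • a) → ∀ y, f (g • y) = f y)
    {a b : Xh} {ha : q a = f a} {hb : q b = f b} (hab : CoinEquiv q f hq hf a b ha hb) :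
    (fun g : G => g • a) ⁻¹' Kset q f hq hf a ha =
      (fun g : G => g • b) ⁻¹' Kset q f hq hf b hb :=
  Set.ext fun g => ⟨fun h => smul_mem_Kset_of_coinEquiv hGfib (hfG g a ha h.1) hab h,
    fun h => smul_mem_Kset_of_coinEquiv hGfib (hfG g b hb h.1) hab.symm h⟩

end Deck

theorem stmt18_general
    {Xh X : Type*} [TopologicalSpace Xh] [TopologicalSpace X]
    (q : Xh → X) (hq : IsCoveringMap q)
    {G : Type*} [Group G] [MulAction G Xh]
    (hGcont : ∀ g : G, Continuous fun y : Xh => g • y)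
    (hGfib : ∀ (g : G) (y : Xh), q (g • y) = q y)
    (hGtrans : ∀ y y' : Xh, q y = q y' → ∃! g : G, g • y = y')
    (n : ℕ) (Γ : G →* Equiv.Perm (Fin n))
    (f : Fin n → Xh → X) (hfcont : ∀ i, Continuous (f i))
    (hfdisj : ∀ (i j : Fin n), i ≠ j → ∀ y : Xh, f i y ≠ f j y)
    (hfequiv : ∀ (g : G) (y : Xh) (i : Fin n), f (Γ g i) (g • y) = f i y)
    (i : Fin n) (x0 : Xh) (hx0 : q x0 = f i x0) :
    (∀ (z : Xh) (hz : q z = f i z), q z = q x0 →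
      Nonempty ((Kset q (f i) (hq.continuous) (hfcont i) x0 hx0) ≃
        (Kset q (f i) (hq.continuous) (hfcont i) z hz))) ∧
    (∀ (z : Xh) (hz : q z = f i z),
      CoinEquiv q (f i) (hq.continuous) (hfcont i) x0 z hx0 hz →
      Nonempty ((Kset q (f i) (hq.continuous) (hfcont i) x0 hx0) ≃
        (Kset q (f i) (hq.continuous) (hfcont i) z hz))) := by
  have : ContinuousConstSMul G Xh := ⟨hGcont⟩
  have hfG := apply_smul_eq_of_coin hGfib hfdisj hfequiv (i := i)
  refine ⟨fun z hz hzx => ?_, fun z hz hxz => ?_⟩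
  · obtain ⟨g, rfl, -⟩ := hGtrans x0 z hzx.symm
    exact ⟨Kset.equivOfHomeomorph (Homeomorph.smul g) (hGfib g) (hfG g x0 hx0 hz) hx0 hz⟩
  · exact ⟨(smulPreimageEquiv hGtrans fun _ hy => hy.2.1).symm.trans <|
      (Equiv.setCongr (smul_preimage_Kset_eq hGfib hfG hxz)).trans
        (smulPreimageEquiv hGtrans fun _ hy => hy.2.1)⟩

/-- In the covering setup, for `x̃₀ ∈ Coin(q, fᵢ)`: (1) for every `z̃` in
`q⁻¹(q x̃₀) ∩ Coin(q, fᵢ)` there is a bijection between `K_i(x̃₀)` and `K_i(z̃)`, and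
(2) for every `z̃ ∈ Coin(q, fᵢ)` Nielsen coincidence equivalent to `x̃₀` there is a
bijection between `K_i(x̃₀)` and `K_i(z̃)`. -/
theorem stmt18
    {Xh X : Type*} [TopologicalSpace Xh] [TopologicalSpace X]
    (q : Xh → X) (hq : IsCoveringMap q)
    {G : Type*} [Group G] [MulAction G Xh]
    (hGcont : ∀ g : G, Continuous fun y : Xh => g • y)
    (hGfib : ∀ (g : G) (y : Xh), q (g • y) = q y)
    (hGtrans : ∀ y y' : Xh, q y = q y' → ∃! g : G, g • y = y')
    (n : ℕ) (hn : 1 ≤ n) (Γ : G →* Equiv.Perm (Fin n))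
    (f : Fin n → Xh → X) (hfcont : ∀ i, Continuous (f i))
    (hfdisj : ∀ (i j : Fin n), i ≠ j → ∀ y : Xh, f i y ≠ f j y)
    (hfequiv : ∀ (g : G) (y : Xh) (i : Fin n), f (Γ g i) (g • y) = f i y)
    (i : Fin n) (x0 : Xh) (hx0 : q x0 = f i x0) :
    (∀ (z : Xh) (hz : q z = f i z), q z = q x0 →
      Nonempty ((Kset q (f i) (hq.continuous) (hfcont i) x0 hx0) ≃
        (Kset q (f i) (hq.continuous) (hfcont i) z hz))) ∧
    (∀ (z : Xh) (hz : q z = f i z),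
      CoinEquiv q (f i) (hq.continuous) (hfcont i) x0 z hx0 hz →
      Nonempty ((Kset q (f i) (hq.continuous) (hfcont i) x0 hx0) ≃
        (Kset q (f i) (hq.continuous) (hfcont i) z hz))) :=
  stmt18_general q hq hGcont hGfib hGtrans n Γ f hfcont hfdisj hfequiv i x0 hx0
end

section
/- Assume the covering setup and fix an index i. Let x̃₀, x̃₁ ∈ Coin(q,fᵢ), and suppose their Nielsen coincidence classes for (q,fᵢ) are related, i.e. there exist z̃, z̃' ∈ Coin(q,fᵢ) with q(z̃) = q(z̃') such that z̃ is Nielsen coincidence equivalent to x̃₀ and z̃' is Nielsen coincidence equivalent to x̃₁ for (q,fᵢ). Then there is a bijection between K_i(x̃₀) and K_i(x̃₁). -/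
section aux
variable {Xh X : Type*} [TopologicalSpace Xh] [TopologicalSpace X]

lemma path_eq_of_pointwise {a b : X} (p p' : Path a b) (h : ∀ t, p t = p' t) : p = p' :=
  Path.ext (funext h)

lemma homotopic_of_pointwise {a b : X} {p q p' q' : Path a b}
    (h : p.Homotopic q) (hp : ∀ t, p t = p' t) (hqq : ∀ t, q t = q' t) :
    p'.Homotopic q' := by
  rw [← path_eq_of_pointwise p p' hp, ← path_eq_of_pointwise q q' hqq]; exact h

variable {q f : Xh → X} {hq : Continuous q} {hf : Continuous f}

lemma coinEquiv_refl (y : Xh) (h : q y = f y) : CoinEquiv q f hq hf y y h h := by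
  refine ⟨Path.refl y, ?_⟩
  have : (Path.refl y).map hq = ((Path.refl y).map hf).cast h h := by
    apply Path.ext; funext t
    simp [Path.cast_coe, h]
  rw [this]

lemma coinEquiv_symm {y₁ y₂ : Xh} {h₁ : q y₁ = f y₁} {h₂ : q y₂ = f y₂}
    (h : CoinEquiv q f hq hf y₁ y₂ h₁ h₂) : CoinEquiv q f hq hf y₂ y₁ h₂ h₁ := by
  obtain ⟨γ, H⟩ := h
  refine ⟨γ.symm, ?_⟩
  have H2 : ((γ.map hq).symm).Homotopic (((γ.map hf).cast h₁ h₂).symm) :=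
    ⟨H.some.symm₂⟩
  refine homotopic_of_pointwise H2 (fun t => ?_) (fun t => ?_) <;>
    simp [Path.map_symm, Path.symm, Path.cast_coe]

lemma coinEquiv_trans {y₁ y₂ y₃ : Xh} {h₁ : q y₁ = f y₁} {h₂ : q y₂ = f y₂}
    {h₃ : q y₃ = f y₃} (ha : CoinEquiv q f hq hf y₁ y₂ h₁ h₂)
    (hb : CoinEquiv q f hq hf y₂ y₃ h₂ h₃) : CoinEquiv q f hq hf y₁ y₃ h₁ h₃ := by
  obtain ⟨γ, H⟩ := ha
  obtain ⟨δ, H'⟩ := hb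
  refine ⟨γ.trans δ, ?_⟩
  have H2 := H.hcomp H'
  refine homotopic_of_pointwise H2 (fun t => ?_) (fun t => ?_) <;>
    simp [Path.map_trans, Path.trans_apply, Path.cast_coe]

end aux

section cover
variable {Xh X : Type*} [TopologicalSpace Xh] [TopologicalSpace X]
variable {q : Xh → X} {hqc : Continuous q}
variable {G : Type*} [Group G] [MulAction G Xh]
variable {n : ℕ} {Γ : G →* Equiv.Perm (Fin n)} {f : Fin n → Xh → X} {hfcont : ∀ i, Continuous (f i)}

lemma gamma_fix (hfdisj : ∀ (i j : Fin n), i ≠ j → ∀ y : Xh, f i y ≠ f j y)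
    (hfequiv : ∀ (g : G) (y : Xh) (i : Fin n), f (Γ g i) (g • y) = f i y)
    (i : Fin n) (g : G) {a b : Xh} (ha : q a = f i a) (hb : q b = f i b)
    (hab : q a = q b) (hg : g • a = b) : Γ g i = i := by
  by_contra hne
  refine hfdisj (Γ g i) i hne b ?_
  calc f (Γ g i) b = f (Γ g i) (g • a) := by rw [hg]
    _ = f i a := hfequiv g a i
    _ = q a := ha.symm
    _ = q b := hab
    _ = f i b := hb

lemma coin_smul (hGfib : ∀ (g : G) (y : Xh), q (g • y) = q y)
    (hfequiv : ∀ (g : G) (y : Xh) (i : Fin n), f (Γ g i) (g • y) = f i y)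
    {i : Fin n} {g : G} (hgi : Γ g i = i) {w : Xh} (hw : q w = f i w) :
    q (g • w) = f i (g • w) := by
  calc q (g • w) = q w := hGfib g w
    _ = f i w := hw
    _ = f (Γ g i) (g • w) := (hfequiv g w i).symm
    _ = f i (g • w) := by rw [hgi]

lemma path_homotopic_cast {a b a' b' : X} (e₁ : a' = a) (e₂ : b' = b)
    {p p' : Path a b} (h : p.Homotopic p') :
    (p.cast e₁ e₂).Homotopic (p'.cast e₁ e₂) := by
  subst e₁; subst e₂
  exact homotopic_of_pointwise h (fun t => by simp [Path.cast_coe])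
    (fun t => by simp [Path.cast_coe])

lemma coinEquiv_smul (hGcont : ∀ g : G, Continuous fun y : Xh => g • y)
    (hGfib : ∀ (g : G) (y : Xh), q (g • y) = q y)
    (hfequiv : ∀ (g : G) (y : Xh) (i : Fin n), f (Γ g i) (g • y) = f i y)
    {i : Fin n} (g : G) (hgi : Γ g i = i) {y₁ y₂ w₁ w₂ : Xh}
    (e₁ : g • y₁ = w₁) (e₂ : g • y₂ = w₂)
    {h₁ : q y₁ = f i y₁} {h₂ : q y₂ = f i y₂}
    {hw₁ : q w₁ = f i w₁} {hw₂ : q w₂ = f i w₂}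
    (h : CoinEquiv q (f i) hqc (hfcont i) y₁ y₂ h₁ h₂) :
    CoinEquiv q (f i) hqc (hfcont i) w₁ w₂ hw₁ hw₂ := by
  subst e₁; subst e₂
  obtain ⟨γ, H⟩ := h
  refine ⟨γ.map (hGcont g), ?_⟩
  have H2 := path_homotopic_cast (hGfib g y₁) (hGfib g y₂) H
  refine homotopic_of_pointwise H2 (fun t => ?_) (fun t => ?_)
  · simp [Path.cast_coe, hGfib]
  · have h3 := hfequiv g (γ t) i
    rw [hgi] at h3
    simp [Path.cast_coe, h3]

end cover

section main
variable {Xh X : Type*} [TopologicalSpace Xh] [TopologicalSpace X]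
variable {q : Xh → X} {hqc : Continuous q}
variable {G : Type*} [Group G] [MulAction G Xh]
variable {n : ℕ} {Γ : G →* Equiv.Perm (Fin n)} {f : Fin n → Xh → X} {hfcont : ∀ i, Continuous (f i)}
variable (hGcont : ∀ g : G, Continuous fun y : Xh => g • y)
variable (hGfib : ∀ (g : G) (y : Xh), q (g • y) = q y)
variable (hGtrans : ∀ y y' : Xh, q y = q y' → ∃! g : G, g • y = y')
variable (hfdisj : ∀ (i j : Fin n), i ≠ j → ∀ y : Xh, f i y ≠ f j y)
variable (hfequiv : ∀ (g : G) (y : Xh) (i : Fin n), f (Γ g i) (g • y) = f i y)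

include hGcont hGfib hGtrans hfdisj hfequiv

lemma ksetEquiv_fibre (i : Fin n) (z z' : Xh) (hz : q z = f i z) (hz' : q z' = f i z')
    (hzz' : q z = q z') :
    Nonempty ((Kset q (f i) hqc (hfcont i) z hz) ≃ (Kset q (f i) hqc (hfcont i) z' hz')) := by
  obtain ⟨g, hgz, hgu⟩ := hGtrans z z' hzz'
  have hgi : Γ g i = i := gamma_fix hfdisj hfequiv i g hz hz' hzz' hgz
  have hgi' : Γ g⁻¹ i = i := by
    rw [map_inv, Equiv.Perm.inv_def]
    exact (Equiv.symm_apply_eq _).mpr hgi.symm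
  have hginv : g⁻¹ • z' = z := by rw [← hgz, inv_smul_smul]
  refine ⟨⟨fun w => ⟨g • w.1, ?_⟩, fun w => ⟨g⁻¹ • w.1, ?_⟩,
    fun w => Subtype.ext (inv_smul_smul g w.1), fun w => Subtype.ext (smul_inv_smul g w.1)⟩⟩
  · obtain ⟨hwc, hwf, hwE⟩ := w.2
    refine ⟨coin_smul hGfib hfequiv hgi hwc, ?_, ?_⟩
    · rw [hGfib, hwf, hzz']
    · exact coinEquiv_smul hGcont hGfib hfequiv g hgi hgz rfl hwE
  · obtain ⟨hwc, hwf, hwE⟩ := w.2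
    refine ⟨coin_smul hGfib hfequiv hgi' hwc, ?_, ?_⟩
    · rw [hGfib, hwf, ← hzz']
    · exact coinEquiv_smul hGcont hGfib hfequiv g⁻¹ hgi' hginv rfl hwE

lemma ksetEquiv_coinEquiv (i : Fin n) (x z : Xh) {hx : q x = f i x} {hz : q z = f i z}
    (hE : CoinEquiv q (f i) hqc (hfcont i) x z hx hz) :
    Nonempty ((Kset q (f i) hqc (hfcont i) x hx) ≃ (Kset q (f i) hqc (hfcont i) z hz)) := by
  classical
  have hmem : ∀ y : Kset q (f i) hqc (hfcont i) x hx, q x = q y.1 :=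
    fun y => y.2.choose_spec.1.symm
  let g : Kset q (f i) hqc (hfcont i) x hx → G := fun y => (hGtrans x y.1 (hmem y)).choose
  have hg : ∀ y, g y • x = y.1 := fun y => (hGtrans x y.1 (hmem y)).choose_spec.1
  have hgu : ∀ y (g' : G), g' • x = y.1 → g' = g y :=
    fun y => (hGtrans x y.1 (hmem y)).choose_spec.2
  have hgi : ∀ y, Γ (g y) i = i :=
    fun y => gamma_fix hfdisj hfequiv i (g y) hx y.2.choose (hmem y) (hg y)
  have Fmem : ∀ y, g y • z ∈ Kset q (f i) hqc (hfcont i) z hz := by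
    intro y
    refine ⟨coin_smul hGfib hfequiv (hgi y) hz, hGfib _ _, ?_⟩
    have e1 : CoinEquiv q (f i) hqc (hfcont i) y.1 (g y • z) y.2.choose
        (coin_smul hGfib hfequiv (hgi y) hz) :=
      coinEquiv_smul hGcont hGfib hfequiv (g y) (hgi y) (hg y) rfl hE
    exact coinEquiv_trans (coinEquiv_trans (coinEquiv_symm hE) y.2.choose_spec.2) e1
  let F : Kset q (f i) hqc (hfcont i) x hx → Kset q (f i) hqc (hfcont i) z hz :=
    fun y => ⟨g y • z, Fmem y⟩
  have hinj : Function.Injective F := by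
    intro y₁ y₂ h
    have h' : g y₁ • z = g y₂ • z := congrArg Subtype.val h
    obtain ⟨g₀, hg₀, hu⟩ := hGtrans z (g y₁ • z) (hGfib _ z).symm
    have : g y₁ = g y₂ := (hu _ rfl).trans (hu _ h'.symm).symm
    refine Subtype.ext ?_
    rw [← hg y₁, ← hg y₂, this]
  have hsurj : Function.Surjective F := by
    intro w
    have hwf : q z = q w.1 := w.2.choose_spec.1.symm
    obtain ⟨h, hh, _⟩ := hGtrans z w.1 hwf
    have hhi : Γ h i = i := gamma_fix hfdisj hfequiv i h hz w.2.choose hwf hh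
    have hyc : q (h • x) = f i (h • x) := coin_smul hGfib hfequiv hhi hx
    have e1 : CoinEquiv q (f i) hqc (hfcont i) (h • x) w.1 hyc w.2.choose :=
      coinEquiv_smul hGcont hGfib hfequiv h hhi rfl hh hE
    have ymem : h • x ∈ Kset q (f i) hqc (hfcont i) x hx :=
      ⟨hyc, hGfib _ _, coinEquiv_trans (coinEquiv_trans hE w.2.choose_spec.2)
        (coinEquiv_symm e1)⟩
    refine ⟨⟨h • x, ymem⟩, ?_⟩
    have : h = g ⟨h • x, ymem⟩ := hgu ⟨h • x, ymem⟩ h rfl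
    refine Subtype.ext ?_
    show g ⟨h • x, ymem⟩ • z = w.1
    rw [← this, hh]
  exact ⟨Equiv.ofBijective F ⟨hinj, hsurj⟩⟩

end main


/-- In the covering setup, if the Nielsen coincidence classes of `x̃₀, x̃₁ ∈ Coin(q, fᵢ)`
are related (i.e. there are coincidence points `z̃, z̃'` over the same point of `X`, with
`z̃` equivalent to `x̃₀` and `z̃'` equivalent to `x̃₁`), then there is a bijection between
`K_i(x̃₀)` and `K_i(x̃₁)`. -/
theorem stmt19
    {Xh X : Type*} [TopologicalSpace Xh] [TopologicalSpace X]
    (q : Xh → X) (hq : IsCoveringMap q)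
    {G : Type*} [Group G] [MulAction G Xh]
    (hGcont : ∀ g : G, Continuous fun y : Xh => g • y)
    (hGfib : ∀ (g : G) (y : Xh), q (g • y) = q y)
    (hGtrans : ∀ y y' : Xh, q y = q y' → ∃! g : G, g • y = y')
    (n : ℕ) (hn : 1 ≤ n) (Γ : G →* Equiv.Perm (Fin n))
    (f : Fin n → Xh → X) (hfcont : ∀ i, Continuous (f i))
    (hfdisj : ∀ (i j : Fin n), i ≠ j → ∀ y : Xh, f i y ≠ f j y)
    (hfequiv : ∀ (g : G) (y : Xh) (i : Fin n), f (Γ g i) (g • y) = f i y)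
    (i : Fin n) (x0 x1 : Xh) (hx0 : q x0 = f i x0) (hx1 : q x1 = f i x1)
    (hrel : ∃ (z z' : Xh) (hz : q z = f i z) (hz' : q z' = f i z'),
      q z = q z' ∧
      CoinEquiv q (f i) (hq.continuous) (hfcont i) x0 z hx0 hz ∧
      CoinEquiv q (f i) (hq.continuous) (hfcont i) x1 z' hx1 hz') :
    Nonempty ((Kset q (f i) (hq.continuous) (hfcont i) x0 hx0) ≃
      (Kset q (f i) (hq.continuous) (hfcont i) x1 hx1)) := by
  obtain ⟨z, z', hz, hz', hzz', hE0, hE1⟩ := hrel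
  have E1 := ksetEquiv_coinEquiv hGcont hGfib hGtrans hfdisj hfequiv i x0 z hE0
  have E2 := ksetEquiv_fibre (hqc := hq.continuous) (hfcont := hfcont) hGcont hGfib hGtrans hfdisj hfequiv i z z' hz hz' hzz'
  have E3 := ksetEquiv_coinEquiv hGcont hGfib hGtrans hfdisj hfequiv i x1 z' hE1
  exact ⟨E1.some.trans (E2.some.trans E3.some.symm)⟩
end
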